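/- arXiv:math/0609747 — 2 statements merged into one kernel-verified Lean document; each statement's English description precedes it below -/
import Mathlib

section
/- The map μ from the Hochschild complex of H (an associative Z/2-algebra) to the Hochschild complex of the cup-product algebra C^*(B,H) of simplicial cochains with coefficients in H, sending f^i to the operation (μf)(b_1,...,b_i) = the i-fold cup product of b_1,...,b_i with coefficients multiplied via f^i, is a chain map: δ̄(μf) = μ(δf), where δ̄ is the Hochschild coboundary of the algebra C^*(B,H) and δ is that of H. -/
/-!
Hochschild cochains of an associative algebra `A` over `ℤ/2`, modeled as
functions on sequences `(ℕ → A) → A`; a cochain of arity `i` is such a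
function that depends only on the first `i` entries and is additive
(= `ℤ/2`-linear) in each of them (predicate `Hoch.IsCochain`).
-/

namespace Hoch

variable {A : Type*} [Ring A]

/-- Shift a sequence of arguments by `i`. -/
def shift (a : ℕ → A) (i : ℕ) : ℕ → A := fun n => a (n + i)

/-- The sequence obtained from `a` by multiplying the `k`-th and `(k+1)`-st entries. -/
def merge (a : ℕ → A) (k : ℕ) : ℕ → A :=
  fun n => if n < k then a n else if n = k then a k * a (k + 1) else a (n + 1)

/-- The Hochschild coboundary of an arity-`i` cochain:
`(δf)(a₀,…,a_i) = a₀·f(a₁,…,a_i) + Σ_k f(…,a_k·a_{k+1},…) + f(a₀,…,a_{i-1})·a_i`. -/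
def δH (i : ℕ) (f : (ℕ → A) → A) : (ℕ → A) → A :=
  fun a => a 0 * f (shift a 1) + (∑ k ∈ Finset.range i, f (merge a k)) + f a * a i

/-- Cup product of an arity-`i` cochain `f` with a cochain `g`:
`(f ⌣ g)(a₀,…) = f(a₀,…,a_{i-1}) · g(a_i,…)`. -/
def cup (i : ℕ) (f g : (ℕ → A) → A) : (ℕ → A) → A :=
  fun a => f a * g (shift a i)

/-- Insert the value of an arity-`j` cochain `g` into position `k` of the argument
sequence `a`. -/
def ins (a : ℕ → A) (k j : ℕ) (g : (ℕ → A) → A) : ℕ → A :=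
  fun n => if n < k then a n else if n = k then g (shift a k) else a (n + j - 1)

/-- The `⌣₁` (insertion) product of an arity-`i` cochain `f` with an arity-`j`
cochain `g`:  `(f ⌣₁ g)(a₁,…,a_{i+j-1}) = Σ_k f(a₁,…,a_k, g(…), …)`. -/
def cup1 (i j : ℕ) (f g : (ℕ → A) → A) : (ℕ → A) → A :=
  fun a => ∑ k ∈ Finset.range i, f (ins a k j g)

/-- `f` is an arity-`i` Hochschild cochain: it depends only on its first `i`
arguments and is additive (`ℤ/2`-multilinear) in each of them. -/
def IsCochain (i : ℕ) (f : (ℕ → A) → A) : Prop :=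
  (∀ a b : ℕ → A, (∀ n < i, a n = b n) → f a = f b) ∧
  (∀ k < i, ∀ (a : ℕ → A) (x y : A),
    f (Function.update a k (x + y)) = f (Function.update a k x) + f (Function.update a k y))

end Hoch

/-!
A concrete model of simplicial cochains of a simplicial set `B` with
coefficients in a `ZMod 2`-algebra `H`: a simplex is a vertex sequence
`ℕ → B`, a cochain of degree `i` is a function `(ℕ → B) → H` (depending only
on the first `i + 1` vertices), with simplicial coboundary `SC.dC`, cup
product `SC.cupC`, and the coefficient-twisted iterated cup products
`SC.cupμ`, `SC.cupμa` induced by a multilinear operation on `H`.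
-/

namespace SC

variable {B H : Type*} [Ring H]

/-- Shift (front-face/back-face splitting) of a simplex, viewed as a vertex
sequence. -/
def shiftB (σ : ℕ → B) (d : ℕ) : ℕ → B := fun n => σ (n + d)

/-- The face of a simplex omitting vertex `k`. -/
def skipB (σ : ℕ → B) (k : ℕ) : ℕ → B := fun n => if n < k then σ n else σ (n + 1)

/-- Simplicial coboundary of a degree-`i` cochain (mod 2):
`(δc)(σ) = Σ_{k=0}^{i+1} c(∂ₖσ)`. -/
def dC (i : ℕ) (c : (ℕ → B) → H) : (ℕ → B) → H :=
  fun σ => ∑ k ∈ Finset.range (i + 2), c (skipB σ k)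

/-- Cup product of a degree-`d1` cochain `x` with a cochain `y`. -/
def cupC (d1 : ℕ) (x y : (ℕ → B) → H) : (ℕ → B) → H :=
  fun σ => x σ * y (shiftB σ d1)

/-- The iterated cup product of cochains `b 0, b 1, …` of degrees
`d 0, d 1, …` with the coefficients multiplied by a multilinear operation `f`
on `H` (the operation `μf` of the paper). -/
def cupμ (f : (ℕ → H) → H) (d : ℕ → ℕ) (b : ℕ → (ℕ → B) → H) : (ℕ → B) → H :=
  fun σ => f (fun m => b m (shiftB σ (∑ t ∈ Finset.range m, d t)))

/-- As `cupμ`, but the last (the `k`-th) coefficient slot of `f` is filled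
with a fixed element `a : H` (a degree-0 coefficient). -/
def cupμa (f : (ℕ → H) → H) (k : ℕ) (d : ℕ → ℕ) (b : ℕ → (ℕ → B) → H) (a : H) :
    (ℕ → B) → H :=
  fun σ => f (fun m => if m < k then b m (shiftB σ (∑ t ∈ Finset.range m, d t)) else a)

/-- Extend a tuple of degrees `Fin k → ℕ` to a sequence `ℕ → ℕ` by zero. -/
def ext {k : ℕ} (dv : Fin k → ℕ) : ℕ → ℕ := fun n => if h : n < k then dv ⟨n, h⟩ else 0

/-- Merged degree sequence: degrees `d k` and `d (k+1)` are added. -/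
def mergeN (d : ℕ → ℕ) (k : ℕ) : ℕ → ℕ :=
  fun n => if n < k then d n else if n = k then d k + d (k + 1) else d (n + 1)

/-- Merged cochain sequence: the cochains `b k` and `b (k+1)` are replaced by
their cup product. -/
def mergeC (b : ℕ → (ℕ → B) → H) (d : ℕ → ℕ) (k : ℕ) : ℕ → (ℕ → B) → H :=
  fun n => if n < k then b n else if n = k then cupC (d k) (b k) (b (k + 1)) else b (n + 1)

end SC

lemma shiftB_shiftB {B : Type*} (σ : ℕ → B) (x y : ℕ) :
    SC.shiftB (SC.shiftB σ x) y = SC.shiftB σ (y + x) := by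
  funext n; simp [SC.shiftB, Nat.add_assoc]

lemma mergeN_sum (d : ℕ → ℕ) (k m : ℕ) (h : k < m) :
    ∑ t ∈ Finset.range m, SC.mergeN d k t = ∑ t ∈ Finset.range (m + 1), d t := by
  induction m with
  | zero => omega
  | succ n ih =>
    rcases Nat.lt_or_ge k n with hk | hk
    · rw [Finset.sum_range_succ, ih hk, Finset.sum_range_succ (n := n + 1)]
      congr 1
      unfold SC.mergeN
      rw [if_neg (by omega), if_neg (by omega)]
    · have hkn : k = n := by omega
      subst hkn
      rw [Finset.sum_range_succ]
      have h1 : ∑ t ∈ Finset.range k, SC.mergeN d k t = ∑ t ∈ Finset.range k, d t :=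
        Finset.sum_congr rfl fun t ht => by
          unfold SC.mergeN; rw [if_pos (Finset.mem_range.mp ht)]
      rw [h1]
      have h2 : SC.mergeN d k k = d k + d (k + 1) := by
        unfold SC.mergeN; rw [if_neg (lt_irrefl k), if_pos rfl]
      rw [h2, Finset.sum_range_succ (n := k + 1), Finset.sum_range_succ (n := k)]
      ring

/-- The map `μ` from the Hochschild complex of `H` to the
Hochschild complex of the cup-product algebra `C^*(B,H)` of simplicial
cochains, sending an arity-`i` cochain `f` to the coefficient-twisted iterated
cup product `(μf)(b₁,…,b_i)`, is a chain map: `δ̄(μf) = μ(δf)`, where `δ̄` is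
the Hochschild coboundary of the algebra `C^*(B,H)` (built from the cup
product) and `δ` the Hochschild coboundary of `H`. -/
theorem mu_is_chain_map
    {B H : Type*} [Ring H] [Algebra (ZMod 2) H]
    (i : ℕ) (f : (ℕ → H) → H) (d : ℕ → ℕ) (b : ℕ → (ℕ → B) → H) :
    SC.cupC (d 0) (b 0) (SC.cupμ f (fun m => d (m + 1)) (fun m => b (m + 1)))
      + (∑ k ∈ Finset.range i, SC.cupμ f (SC.mergeN d k) (SC.mergeC b d k))
      + SC.cupC (∑ t ∈ Finset.range i, d t) (SC.cupμ f d b) (b i)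
    = SC.cupμ (Hoch.δH i f) d b := by
  funext σ
  set a : ℕ → H := fun m => b m (SC.shiftB σ (∑ t ∈ Finset.range m, d t)) with ha
  have h1 : SC.cupC (d 0) (b 0)
      (SC.cupμ f (fun m => d (m + 1)) (fun m => b (m + 1))) σ
      = a 0 * f (Hoch.shift a 1) := by
    show b 0 σ * f _ = _
    have e0 : a 0 = b 0 σ := by
      simp only [ha]
      congr 1
    have earg : (fun m => b (m + 1)
        (SC.shiftB (SC.shiftB σ (d 0)) (∑ t ∈ Finset.range m, d (t + 1))))
        = Hoch.shift a 1 := by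
      funext m
      simp only [Hoch.shift, ha, shiftB_shiftB]
      congr 1
      rw [Finset.sum_range_succ']
    rw [e0]
    exact congrArg (b 0 σ * f ·) earg
  have h2 : ∀ k ∈ Finset.range i,
      SC.cupμ f (SC.mergeN d k) (SC.mergeC b d k) σ = f (Hoch.merge a k) := by
    intro k hk
    unfold SC.cupμ
    congr 1
    funext m
    rcases lt_trichotomy m k with hm | hm | hm
    · have e1 : SC.mergeC b d k m = b m := by unfold SC.mergeC; rw [if_pos hm]
      have e2 : ∑ t ∈ Finset.range m, SC.mergeN d k t = ∑ t ∈ Finset.range m, d t :=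
        Finset.sum_congr rfl fun t ht => by
          unfold SC.mergeN; rw [if_pos (by have := Finset.mem_range.mp ht; omega)]
      simp only [Hoch.merge, if_pos hm, e1, e2, ha]
    · subst hm
      have e1 : SC.mergeC b d m m = SC.cupC (d m) (b m) (b (m + 1)) := by
        unfold SC.mergeC; rw [if_neg (lt_irrefl m), if_pos rfl]
      have e2 : ∑ t ∈ Finset.range m, SC.mergeN d m t = ∑ t ∈ Finset.range m, d t :=
        Finset.sum_congr rfl fun t ht => by
          unfold SC.mergeN; rw [if_pos (Finset.mem_range.mp ht)]
      simp only [Hoch.merge, lt_irrefl, if_neg, if_pos rfl, e1, e2, ha, SC.cupC,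
        shiftB_shiftB, if_false, if_true]
      congr 2
      rw [Finset.sum_range_succ, Nat.add_comm]
    · have e1 : SC.mergeC b d k m = b (m + 1) := by
        unfold SC.mergeC; rw [if_neg (by omega), if_neg (by omega)]
      have e2 := mergeN_sum d k m hm
      simp only [Hoch.merge, if_neg (by omega : ¬ m < k), if_neg (by omega : ¬ m = k),
        e1, e2, ha]
  have h3 : SC.cupC (∑ t ∈ Finset.range i, d t) (SC.cupμ f d b) (b i) σ
      = f a * a i := by
    show SC.cupμ f d b σ * b i _ = _
    rfl
  show _ + (∑ k ∈ Finset.range i, SC.cupμ f (SC.mergeN d k) (SC.mergeC b d k)) σ + _ = _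
  rw [Finset.sum_apply, Finset.sum_congr rfl h2, h1, h3]
  rfl
end

section
/- Let A be an associative Z/2-algebra, f = f^3+f^4+... a Hochschild twisting cochain (δf = f ⌣₁ f). Suppose the algebra map μ into Hochschild cochains of R = C^*(B,H) is a chain map commuting with ⌣₁ up to the arity-wise identities induced by cup products. Then for any h_0 ∈ R, the curvature element κ(h_0) = δh_0 + h_0·h_0 + Σ_k (μf^k)(h_0,...,h_0) satisfies the Bianchi-type identity: δκ(h_0) = h_0·κ(h_0) + κ(h_0)·h_0 + Σ_k Σ_j (μf^k)(h_0,...,κ(h_0) (in slot j),...,h_0). -/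
/-!
Differentiating `κ = dh + h·h + S`, `S = Σₖ μfᵏ(h,…,h)`, by the Leibniz rules gives
`dκ = dh·h + h·dh + Σₖ Σⱼ μfᵏ(h,…,dh,…,h)`. Expanding the right-hand side of the identity
by multilinearity, the terms left over are `h·(h·h)` twice and
`h·S + S·h + Σₖ Σⱼ μfᵏ(h,…,h·h,…,h) + Σₖ Σⱼ μfᵏ(h,…,S,…,h)`.
Summing the twisting-cochain identity `δ(μfᵏ) = Σ_{s+t=k+2} μfˢ ⌣₁ μfᵗ` over all arities and
evaluating it at `(h,…,h)` shows that the first three of these add up to the fourth, so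
everything cancels in characteristic two.
-/

open Finset Function

theorem Finset.sum_range_sum_antidiagonal_add_two {β : Type*} [AddCommMonoid β] {N : ℕ}
    {F : ℕ × ℕ → β} (hF : ∀ p : ℕ × ℕ, F p ≠ 0 → 2 ≤ p.1 + p.2 ∧ p.1 < N ∧ p.2 < N) :
    ∑ k ∈ range (2 * N), ∑ p ∈ antidiagonal (k + 2), F p
      = ∑ i ∈ range N, ∑ j ∈ range N, F (i, j) := by
  rw [sum_sigma', ← sum_product']
  refine sum_bij_ne_zero (fun x _ _ => x.2) (fun x _ hFx => ?_) (fun x hx _ y hy _ hxy => ?_)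
    (fun p _ hFp => ?_) (fun _ _ _ => rfl)
  · obtain ⟨-, h1, h2⟩ := hF x.2 hFx
    simpa using ⟨h1, h2⟩
  · obtain ⟨k, p⟩ := x
    obtain ⟨l, q⟩ := y
    obtain rfl : p = q := hxy
    simp only [mem_sigma, HasAntidiagonal.mem_antidiagonal] at hx hy
    exact Sigma.ext (show k = l by omega) HEq.rfl
  · obtain ⟨hsum, hp1, hp2⟩ := hF p hFp
    have hmem : (⟨p.1 + p.2 - 2, p⟩ : Σ _ : ℕ, ℕ × ℕ)
        ∈ (range (2 * N)).sigma fun k => antidiagonal (k + 2) := by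
      simp only [mem_sigma, mem_range, HasAntidiagonal.mem_antidiagonal]
      omega
    exact ⟨_, hmem, hFp, rfl⟩

namespace Hoch

variable {A : Type*}

theorem shift_const (x : A) (i : ℕ) : shift (fun _ => x) i = fun _ => x := rfl

theorem ins_const (x : A) (k j : ℕ) (g : (ℕ → A) → A) :
    ins (fun _ => x) k j g = update (fun _ => x) k (g fun _ => x) := by
  funext n
  simp only [ins, shift_const, update_apply]
  split_ifs <;> first | rfl | omega

variable [Ring A]

theorem merge_const (x : A) (k : ℕ) :
    merge (fun _ => x) k = update (fun _ => x) k (x * x) := by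
  funext n
  simp only [merge, update_apply]
  split_ifs <;> first | rfl | omega

theorem δH_const (i : ℕ) (f : (ℕ → A) → A) (x : A) :
    δH i f (fun _ => x)
      = x * f (fun _ => x) + ∑ k ∈ range i, f (update (fun _ => x) k (x * x))
        + f (fun _ => x) * x := by
  simp only [δH, shift_const, merge_const]

theorem cup1_const (i j : ℕ) (f g : (ℕ → A) → A) (x : A) :
    cup1 i j f g (fun _ => x) = ∑ k ∈ range i, f (update (fun _ => x) k (g fun _ => x)) := by
  simp only [cup1, ins_const]

@[simp]
theorem cup1_zero_left (i j : ℕ) (g : (ℕ → A) → A) : cup1 i j 0 g = 0 := by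
  funext a
  simp [cup1]

namespace IsCochain

variable {i : ℕ} {f : (ℕ → A) → A}

def slotHom (hf : IsCochain i f) {k : ℕ} (hk : k < i) (a : ℕ → A) : A →+ A :=
  AddMonoidHom.mk' (fun x => f (update a k x)) (hf.2 k hk a)

theorem map_update_zero (hf : IsCochain i f) {k : ℕ} (hk : k < i) (a : ℕ → A) :
    f (update a k 0) = 0 :=
  map_zero (hf.slotHom hk a)

theorem map_update_add (hf : IsCochain i f) {k : ℕ} (hk : k < i) (a : ℕ → A) (x y : A) :
    f (update a k (x + y)) = f (update a k x) + f (update a k y) :=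
  hf.2 k hk a x y

theorem map_update_sum (hf : IsCochain i f) {k : ℕ} (hk : k < i) (a : ℕ → A)
    {ι : Type*} (s : Finset ι) (g : ι → A) :
    f (update a k (∑ l ∈ s, g l)) = ∑ l ∈ s, f (update a k (g l)) :=
  map_sum (hf.slotHom hk a) g s

theorem cup1_zero_right (hf : IsCochain i f) (j : ℕ) : cup1 i j f 0 = 0 := by
  funext a
  refine sum_eq_zero fun k hk => ?_
  have hslot : ins a k j 0 = update (ins a k j 0) k 0 := by simp [ins]
  rw [hslot]
  exact hf.map_update_zero (mem_range.mp hk) _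

end IsCochain

variable {M : ℕ → (ℕ → A) → A} {N : ℕ}

theorem sum_δH_eq_sum_sum_cup1 (hM : ∀ k, IsCochain k (M k)) (hM0 : M 0 = 0)
    (hMN : ∀ k, N ≤ k → M k = 0)
    (hchain : ∀ k, δH k (M k) = ∑ p ∈ antidiagonal (k + 2), cup1 p.1 p.2 (M p.1) (M p.2)) :
    ∑ k ∈ range N, δH k (M k) = ∑ i ∈ range N, ∑ j ∈ range N, cup1 i j (M i) (M j) := by
  have hδ : ∑ k ∈ range N, δH k (M k) = ∑ k ∈ range (2 * N), δH k (M k) := by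
    refine sum_subset (range_subset_range.2 (by omega)) fun k _ hk => ?_
    rw [hMN k (by simpa using hk)]
    funext a
    simp [δH]
  rw [hδ, sum_congr rfl fun k _ => hchain k]
  refine sum_range_sum_antidiagonal_add_two fun ⟨i, j⟩ hij => ?_
  have hMi : M i ≠ 0 := fun h => hij (by rw [h, cup1_zero_left])
  have hMj : M j ≠ 0 := fun h => hij (by rw [h, (hM i).cup1_zero_right])
  have hsupp : ∀ {k}, M k ≠ 0 → 0 < k ∧ k < N := fun hk =>
    ⟨Nat.pos_of_ne_zero (by rintro rfl; exact hk hM0), not_le.1 (mt (hMN _) hk)⟩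
  obtain ⟨hi0, hiN⟩ := hsupp hMi
  obtain ⟨hj0, hjN⟩ := hsupp hMj
  exact ⟨by dsimp only; omega, hiN, hjN⟩

theorem sum_δH_const (x : A) :
    (∑ k ∈ range N, δH k (M k)) (fun _ => x)
      = x * ∑ k ∈ range N, M k (fun _ => x)
        + ∑ k ∈ range N, ∑ j ∈ range k, M k (update (fun _ => x) j (x * x))
        + (∑ k ∈ range N, M k (fun _ => x)) * x := by
  simp only [Finset.sum_apply, δH_const, sum_add_distrib, mul_sum, sum_mul]

theorem sum_sum_cup1_const (hM : ∀ k, IsCochain k (M k)) (x : A) :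
    (∑ i ∈ range N, ∑ j ∈ range N, cup1 i j (M i) (M j)) (fun _ => x)
      = ∑ i ∈ range N, ∑ k ∈ range i,
          M i (update (fun _ => x) k (∑ j ∈ range N, M j (fun _ => x))) := by
  simp only [Finset.sum_apply, cup1_const]
  refine sum_congr rfl fun i _ => ?_
  rw [sum_comm]
  exact sum_congr rfl fun k hk => ((hM i).map_update_sum (mem_range.1 hk) _ _ _).symm

theorem sum_sum_update_add (hM : ∀ k, IsCochain k (M k)) (a : ℕ → A) (u v w : A) :
    ∑ k ∈ range N, ∑ j ∈ range k, M k (update a j (u + v + w))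
      = ∑ k ∈ range N, ∑ j ∈ range k, M k (update a j u)
        + ∑ k ∈ range N, ∑ j ∈ range k, M k (update a j v)
        + ∑ k ∈ range N, ∑ j ∈ range k, M k (update a j w) := by
  simp only [← sum_add_distrib]
  refine sum_congr rfl fun k _ => sum_congr rfl fun j hj => ?_
  rw [(hM k).map_update_add (mem_range.1 hj), (hM k).map_update_add (mem_range.1 hj)]

end Hoch

theorem add_self_eq_zero_of_module_zmod_two {V : Type*} [AddCommGroup V] [Module (ZMod 2) V]
    (x : V) : x + x = 0 := by
  rw [← two_smul (ZMod 2) x, show (2 : ZMod 2) = 0 from rfl, zero_smul]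

section Curvature

variable {R : Type*} [Ring R]

def curvature (d : R → R) (M : ℕ → (ℕ → R) → R) (N : ℕ) (h : R) : R :=
  d h + h * h + ∑ k ∈ range N, M k (fun _ => h)

theorem d_curvature {d : R → R} (hadd : ∀ x y, d (x + y) = d x + d y)
    (hleib : ∀ x y, d (x * y) = d x * y + x * d y) (hdd : ∀ x, d (d x) = 0)
    {M : ℕ → (ℕ → R) → R}
    (hLeib : ∀ (k : ℕ) (r : ℕ → R),
      d (M k r) = ∑ j ∈ range k, M k (update r j (d (r j))))
    (N : ℕ) (h : R) :
    d (curvature d M N h)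
      = d h * h + h * d h + ∑ k ∈ range N, ∑ j ∈ range k, M k (update (fun _ => h) j (d h)) := by
  have hdsum : d (∑ k ∈ range N, M k fun _ => h) = ∑ k ∈ range N, d (M k fun _ => h) :=
    map_sum (AddMonoidHom.mk' d hadd) _ _
  rw [curvature, hadd, hadd, hdd, hleib, zero_add, hdsum]
  simp only [hLeib]

end Curvature

/-- Bianchi-type identity for the curvature of the deformed
Maurer–Cartan operator.  `R` is a DG algebra over `ZMod 2` with differential
`d` (the cup-product algebra `C^*(B,H)`), and `M k` is the `k`-ary operation
`μf^k` induced by a Hochschild twisting cochain `f = f³ + f⁴ + ⋯` (so the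
Hochschild coboundary of `M k`, formed with the multiplication of `R`, equals
the image of `δf = f ⌣₁ f`, and `d` acts on `M k` by the Leibniz rule).
Then the curvature `κ(h₀) = δh₀ + h₀·h₀ + Σ_k (μf^k)(h₀,…,h₀)` satisfies
`δκ = h₀·κ + κ·h₀ + Σ_k Σ_j (μf^k)(h₀,…,κ,…,h₀)`. -/
theorem curvature_bianchi_identity
    {R : Type*} [Ring R] [Algebra (ZMod 2) R]
    (d : R → R)
    (hadd : ∀ x y, d (x + y) = d x + d y)
    (hleib : ∀ x y, d (x * y) = d x * y + x * d y)
    (hdd : ∀ x, d (d x) = 0)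
    (N : ℕ) (M : ℕ → (ℕ → R) → R)
    (hM : ∀ k, Hoch.IsCochain k (M k))
    (hM3 : ∀ k < 3, M k = 0)
    (hMN : ∀ k, N ≤ k → M k = 0)
    (hchain : ∀ k, Hoch.δH k (M k)
        = ∑ p ∈ Finset.HasAntidiagonal.antidiagonal (k + 2), Hoch.cup1 p.1 p.2 (M p.1) (M p.2))
    (hLeib : ∀ (k : ℕ) (r : ℕ → R),
        d (M k r) = ∑ j ∈ Finset.range k, M k (Function.update r j (d (r j))))
    (h0 : R) :
    d (d h0 + h0 * h0 + ∑ k ∈ Finset.range N, M k (fun _ => h0))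
      = h0 * (d h0 + h0 * h0 + ∑ k ∈ Finset.range N, M k (fun _ => h0))
        + (d h0 + h0 * h0 + ∑ k ∈ Finset.range N, M k (fun _ => h0)) * h0
        + ∑ k ∈ Finset.range N, ∑ j ∈ Finset.range k,
            M k (Function.update (fun _ => h0) j
              (d h0 + h0 * h0 + ∑ k' ∈ Finset.range N, M k' (fun _ => h0))) := by
  have htwist := congrFun (Hoch.sum_δH_eq_sum_sum_cup1 hM (hM3 0 (by norm_num)) hMN hchain)
    (fun _ => h0)
  rw [Hoch.sum_δH_const, Hoch.sum_sum_cup1_const hM] at htwist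
  change d (curvature d M N h0) = _
  rw [d_curvature hadd hleib hdd hLeib, Hoch.sum_sum_update_add hM, ← htwist]
  set S := ∑ k ∈ range N, M k (fun _ => h0)
  set D := ∑ k ∈ range N, ∑ j ∈ range k, M k (update (fun _ => h0) j (d h0))
  set C := ∑ k ∈ range N, ∑ j ∈ range k, M k (update (fun _ => h0) j (h0 * h0))
  have hchar : ∀ y : R, y + y = 0 := add_self_eq_zero_of_module_zmod_two
  calc _ = d h0 * h0 + h0 * d h0 + D + (h0 * (h0 * h0) + h0 * (h0 * h0))
        + (h0 * S + h0 * S) + (S * h0 + S * h0) + (C + C) := by simp only [hchar, add_zero]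
    _ = _ := by simp only [mul_add, add_mul, mul_assoc]; abel
end
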